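/- arXiv:2403.02276 — 5 statements merged into one kernel-verified Lean document; each statement's English description precedes it below -/
import Mathlib

section
/- For all integers 0 ≤ k ≤ n, there exists a family F ⊆ S_n with |F| = n!/(n−k)! such that every pair α, β ∈ F satisfies d_U(α, β) ≤ k. In other words, f_k(n) ≥ n!/(n−k)!, where f_k(n) denotes the maximum size of a subset of S_n all of whose pairwise Ulam distances are at most k. -/
/-- The string (as a list) obtained from the one-line notation of `σ`
by deleting all symbols in `A`. -/
def ulamDel {n : ℕ} (σ : Equiv.Perm (Fin n)) (A : Finset (Fin n)) : List (Fin n) :=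
  (List.ofFn fun i => σ i).filter (fun x => decide (x ∉ A))

/-- The Ulam distance between two permutations: the least number of distinct
symbols that must be deleted from each until they are equal. -/
noncomputable def ulamDist {n : ℕ} (α β : Equiv.Perm (Fin n)) : ℕ :=
  sInf {m | ∃ A : Finset (Fin n), A.card = m ∧ ulamDel α A = ulamDel β A}

/-- `f_k(n)`: the maximum size of a set `F ⊆ S_n` such that `d_U(α, β) ≤ k`
for all `α, β ∈ F`. -/
noncomputable def maxDiamFamily (n k : ℕ) : ℕ :=
  sSup {m | ∃ F : Finset (Equiv.Perm (Fin n)), F.card = m ∧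
    ∀ α ∈ F, ∀ β ∈ F, ulamDist α β ≤ k}

/-! Fix the positions `f : Fin k ↪ Fin n` of the `k` largest symbols and fill the remaining
positions with the `n - k` smallest symbols in increasing order. Deleting the `k` largest symbols
from any of these `n! / (n - k)!` permutations leaves the same increasing string, so any two of
them are within Ulam distance `k`. -/

section UlamDel

variable {n : ℕ}

lemma mem_ulamDel {σ : Equiv.Perm (Fin n)} {A : Finset (Fin n)} {x : Fin n} :
    x ∈ ulamDel σ A ↔ x ∉ A := by
  simpa [ulamDel, List.mem_ofFn] using fun _ => σ.surjective x

lemma pairwise_lt_ulamDel {σ : Equiv.Perm (Fin n)} {A : Finset (Fin n)}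
    (h : StrictMonoOn σ.symm (↑A)ᶜ) : (ulamDel σ A).Pairwise (· < ·) := by
  rw [ulamDel, List.pairwise_filter, List.pairwise_ofFn]
  intro i j hij hi hj
  simp only [decide_eq_true_eq] at hi hj
  rcases lt_trichotomy (σ i) (σ j) with hlt | heq | hgt
  · exact hlt
  · exact absurd (σ.injective heq) hij.ne
  · have hji : j < i := by simpa using h (by simpa using hj) (by simpa using hi) hgt
    exact absurd hij hji.not_gt

lemma ulamDist_le_card {α β : Equiv.Perm (Fin n)} {A : Finset (Fin n)}
    (h : ulamDel α A = ulamDel β A) : ulamDist α β ≤ A.card :=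
  Nat.sInf_le ⟨A, rfl, h⟩

lemma ulamDist_le_card_of_strictMonoOn {α β : Equiv.Perm (Fin n)} {A : Finset (Fin n)}
    (hα : StrictMonoOn α.symm (↑A)ᶜ) (hβ : StrictMonoOn β.symm (↑A)ᶜ) :
    ulamDist α β ≤ A.card :=
  ulamDist_le_card <| (pairwise_lt_ulamDel hα).eq_of_mem_iff (pairwise_lt_ulamDel hβ)
    fun _ => by rw [mem_ulamDel, mem_ulamDel]

lemma card_le_maxDiamFamily {k : ℕ} (F : Finset (Equiv.Perm (Fin n)))
    (hF : ∀ α ∈ F, ∀ β ∈ F, ulamDist α β ≤ k) : F.card ≤ maxDiamFamily n k :=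
  le_csSup
    ⟨Fintype.card (Equiv.Perm (Fin n)), by rintro _ ⟨G, rfl, -⟩; exact G.card_le_univ⟩
    ⟨F, rfl, hF⟩

end UlamDel

section PositionPerm

variable {m k : ℕ}

lemma card_compl_map_univ (f : Fin k ↪ Fin (m + k)) : (Finset.univ.map f)ᶜ.card = m := by
  simp [Finset.card_compl]

/-- Maps each symbol to its position: `m + j` goes to `f j`, and `0, …, m - 1` fill the
positions outside the range of `f` in increasing order. The permutation in one-line notation is
its inverse. -/
noncomputable def positionPerm (f : Fin k ↪ Fin (m + k)) : Equiv.Perm (Fin (m + k)) :=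
  Equiv.ofBijective (Fin.append ((Finset.univ.map f)ᶜ.orderEmbOfFin (card_compl_map_univ f)) f) <|
    Finite.injective_iff_bijective.mp <| Fin.append_injective_iff.mpr
      ⟨(Finset.orderEmbOfFin _ _).injective, f.injective, fun i j hij => by
        simpa [hij] using Finset.orderEmbOfFin_mem _ (card_compl_map_univ f) i⟩

lemma positionPerm_natAdd (f : Fin k ↪ Fin (m + k)) (j : Fin k) :
    positionPerm f (Fin.natAdd m j) = f j :=
  Fin.append_right _ _ j

lemma positionPerm_injective : Function.Injective (positionPerm (m := m) (k := k)) :=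
  fun f g hfg => Function.Embedding.ext fun j => by
    rw [← positionPerm_natAdd, ← positionPerm_natAdd, hfg]

lemma strictMonoOn_positionPerm (f : Fin k ↪ Fin (m + k)) :
    StrictMonoOn (positionPerm f)
      (↑(Finset.univ.map (Fin.natAddEmb m) : Finset (Fin (m + k))))ᶜ := by
  intro x hx y hy hxy
  induction x using Fin.addCases with
  | right j => simp at hx
  | left i =>
    induction y using Fin.addCases with
    | right j => simp at hy
    | left i' =>
      simp only [positionPerm, Equiv.ofBijective_apply, Fin.append_left]
      exact OrderEmbedding.strictMono _ hxy

end PositionPerm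

theorem exists_ulamDist_le_card_eq_descFactorial (m k : ℕ) :
    ∃ F : Finset (Equiv.Perm (Fin (m + k))), F.card = (m + k).descFactorial k ∧
      ∀ α ∈ F, ∀ β ∈ F, ulamDist α β ≤ k := by
  refine ⟨Finset.univ.image fun f => (positionPerm f).symm, ?_, ?_⟩
  · rw [Finset.card_image_of_injective _
      fun f g h => positionPerm_injective (Equiv.symm_bijective.injective h),
      Finset.card_univ, Fintype.card_embedding_eq, Fintype.card_fin, Fintype.card_fin]
  · simp only [Finset.mem_image, Finset.mem_univ, true_and]
    rintro _ ⟨f, rfl⟩ _ ⟨g, rfl⟩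
    calc ulamDist _ _ ≤ (Finset.univ.map (Fin.natAddEmb m)).card :=
          ulamDist_le_card_of_strictMonoOn
            (by rw [Equiv.symm_symm]; exact strictMonoOn_positionPerm f)
            (by rw [Equiv.symm_symm]; exact strictMonoOn_positionPerm g)
      _ = k := by simp

/-- For all `0 ≤ k ≤ n` there is a family `F ⊆ S_n` with
`|F| = n!/(n−k)!` whose pairwise Ulam distances are all at most `k`;
in other words, `f_k(n) ≥ n!/(n−k)!`. -/
theorem ulam_diametric_lower_bound (n k : ℕ) (hkn : k ≤ n) :
    (∃ F : Finset (Equiv.Perm (Fin n)), F.card = n.factorial / (n - k).factorial ∧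
        ∀ α ∈ F, ∀ β ∈ F, ulamDist α β ≤ k) ∧
      n.factorial / (n - k).factorial ≤ maxDiamFamily n k := by
  obtain ⟨m, rfl⟩ := Nat.exists_eq_add_of_le' hkn
  obtain ⟨F, hcard, hF⟩ := exists_ulamDist_le_card_eq_descFactorial m k
  rw [← Nat.descFactorial_eq_div hkn]
  exact ⟨⟨F, hcard, hF⟩, hcard ▸ card_le_maxDiamFamily F hF⟩
end

section
/- For all integers 0 ≤ k ≤ n, (n+1)·f_k(n) ≤ f_{k+1}(n+1). -/
/- ### Auxiliary material -/

lemma ofFn_filter_succAbove {α : Type*} :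
    ∀ {n : ℕ} (f : Fin (n + 1) → α) (j : Fin (n + 1)) (q : α → Bool),
      q (f j) = false →
      (List.ofFn f).filter q = (List.ofFn (f ∘ j.succAbove)).filter q := by
  intro n
  induction n with
  | zero =>
    intro f j q h
    have hj : j = 0 := Fin.fin_one_eq_zero j
    subst hj
    simp [List.ofFn_succ, List.filter_cons, h]
  | succ m ih =>
    intro f j q h
    induction j using Fin.cases with
    | zero =>
      rw [List.ofFn_succ, List.filter_cons]
      simp only [h]
      rfl
    | succ i =>
      have key := ih (fun t => f t.succ) i q (by simpa using h)
      have hfn : (List.ofFn (f ∘ (i.succ).succAbove)) =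
          f 0 :: List.ofFn (fun t => f (i.succAbove t).succ) := by
        rw [List.ofFn_succ]
        simp [Function.comp, Fin.succ_succAbove_zero, Fin.succ_succAbove_succ]
      rw [List.ofFn_succ, hfn, List.filter_cons, List.filter_cons, key]
      rfl

/-- The permutation of `Fin (n+1)` whose one-line notation is that of `σ`
with the new symbol `Fin.last n` inserted at position `j`. -/
def insPerm {n : ℕ} (σ : Equiv.Perm (Fin n)) (j : Fin (n + 1)) : Equiv.Perm (Fin (n + 1)) :=
  (finSuccEquiv' j).trans (σ.optionCongr.trans (finSuccEquiv' (Fin.last n)).symm)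

@[simp] lemma insPerm_apply_self {n : ℕ} (σ : Equiv.Perm (Fin n)) (j : Fin (n + 1)) :
    insPerm σ j j = Fin.last n := by
  simp [insPerm, finSuccEquiv'_at, finSuccEquiv'_symm_none]

@[simp] lemma insPerm_apply_succAbove {n : ℕ} (σ : Equiv.Perm (Fin n)) (j : Fin (n + 1))
    (t : Fin n) : insPerm σ j (j.succAbove t) = (σ t).castSucc := by
  simp [insPerm, finSuccEquiv'_succAbove, finSuccEquiv'_symm_some]

lemma mem_insertLast {n : ℕ} (A : Finset (Fin n)) (y : Fin n) :
    y.castSucc ∈ insert (Fin.last n) (A.image Fin.castSucc) ↔ y ∈ A := by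
  simp only [Finset.mem_insert, Finset.mem_image]
  constructor
  · rintro (h | ⟨a, ha, hay⟩)
    · exact absurd h (Fin.castSucc_lt_last y).ne
    · rwa [← (Fin.castSucc_injective n) hay]
  · intro h; exact Or.inr ⟨y, h, rfl⟩

lemma ulamDel_insPerm {n : ℕ} (σ : Equiv.Perm (Fin n)) (j : Fin (n + 1)) (A : Finset (Fin n)) :
    ulamDel (insPerm σ j) (insert (Fin.last n) (A.image Fin.castSucc)) =
      (ulamDel σ A).map Fin.castSucc := by
  unfold ulamDel
  set A' := insert (Fin.last n) (A.image Fin.castSucc) with hA'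
  have h1 : (fun x => decide (x ∉ A')) ((fun i => insPerm σ j i) j) = false := by
    simp [hA']
  rw [ofFn_filter_succAbove _ j _ h1]
  have h2 : (List.ofFn ((fun i => insPerm σ j i) ∘ j.succAbove)) =
      (List.ofFn fun i => σ i).map Fin.castSucc := by
    rw [List.map_ofFn]
    congr 1
    funext t
    simp [Function.comp]
  rw [h2, List.filter_map]
  congr 1
  apply List.filter_congr
  intro y _
  simp [Function.comp, hA', mem_insertLast A y]

lemma insPerm_injective {n : ℕ} {σ τ : Equiv.Perm (Fin n)} {j j' : Fin (n + 1)}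
    (h : insPerm σ j = insPerm τ j') : σ = τ ∧ j = j' := by
  have hjj : j = j' := by
    have h1 : insPerm σ j j' = Fin.last n := by rw [h]; simp
    have h2 : insPerm σ j j = Fin.last n := by simp
    exact ((insPerm σ j).injective (h2.trans h1.symm))
  subst hjj
  refine ⟨?_, rfl⟩
  ext t
  have : insPerm σ j (j.succAbove t) = insPerm τ j (j.succAbove t) := by rw [h]
  exact congrArg Fin.val (by simpa using this)

lemma ulamDist_exists {n : ℕ} (α β : Equiv.Perm (Fin n)) :
    ∃ A : Finset (Fin n), A.card = ulamDist α β ∧ ulamDel α A = ulamDel β A := by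
  have hne : {m | ∃ A : Finset (Fin n), A.card = m ∧ ulamDel α A = ulamDel β A}.Nonempty := by
    refine ⟨(Finset.univ : Finset (Fin n)).card, Finset.univ, rfl, ?_⟩
    simp [ulamDel]
  exact Nat.sInf_mem hne

/-- For all integers `0 ≤ k ≤ n`, `(n+1)·f_k(n) ≤ f_{k+1}(n+1)`. -/
theorem maxDiamFamily_tensoring (n k : ℕ) (hk : k ≤ n) :
    (n + 1) * maxDiamFamily n k ≤ maxDiamFamily (n + 1) (k + 1) := by
  classical
  -- the defining set for `maxDiamFamily n k` has a maximum element
  have hmem : maxDiamFamily n k ∈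
      {m | ∃ F : Finset (Equiv.Perm (Fin n)), F.card = m ∧
        ∀ α ∈ F, ∀ β ∈ F, ulamDist α β ≤ k} := by
    apply Nat.sSup_mem
    · exact ⟨0, ∅, by simp⟩
    · exact ⟨Fintype.card (Equiv.Perm (Fin n)), by
        rintro m ⟨F, hF, -⟩; rw [← hF, ← Finset.card_univ]; exact Finset.card_le_univ F⟩
  obtain ⟨F, hFcard, hFdist⟩ := hmem
  -- the enlarged family
  set F' : Finset (Equiv.Perm (Fin (n + 1))) :=
    (F ×ˢ (Finset.univ : Finset (Fin (n + 1)))).image (fun p => insPerm p.1 p.2) with hF'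
  have hcard : F'.card = F.card * (n + 1) := by
    rw [hF', Finset.card_image_of_injOn, Finset.card_product, Finset.card_univ, Fintype.card_fin]
    intro p _ q _ hpq
    obtain ⟨h1, h2⟩ := insPerm_injective hpq
    exact Prod.ext h1 h2
  have hdist : ∀ α ∈ F', ∀ β ∈ F', ulamDist α β ≤ k + 1 := by
    intro α hα β hβ
    rw [hF', Finset.mem_image] at hα hβ
    obtain ⟨⟨σ, j1⟩, hσ, rfl⟩ := hα
    obtain ⟨⟨τ, j2⟩, hτ, rfl⟩ := hβ
    rw [Finset.mem_product] at hσ hτ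
    obtain ⟨A, hAcard, hAdel⟩ := ulamDist_exists σ τ
    have hAk : A.card ≤ k := hAcard.trans_le (hFdist σ hσ.1 τ hτ.1)
    have hlast : Fin.last n ∉ A.image Fin.castSucc := by
      simp only [Finset.mem_image, not_exists]
      rintro a ⟨-, ha⟩
      exact (Fin.castSucc_lt_last a).ne ha
    have hcardA' : (insert (Fin.last n) (A.image Fin.castSucc)).card = A.card + 1 := by
      rw [Finset.card_insert_of_notMem hlast,
        Finset.card_image_of_injective _ (Fin.castSucc_injective n)]
    have hdel : ulamDel (insPerm σ j1) (insert (Fin.last n) (A.image Fin.castSucc)) =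
        ulamDel (insPerm τ j2) (insert (Fin.last n) (A.image Fin.castSucc)) := by
      rw [ulamDel_insPerm, ulamDel_insPerm, hAdel]
    calc ulamDist (insPerm σ j1) (insPerm τ j2)
        ≤ (insert (Fin.last n) (A.image Fin.castSucc)).card :=
          Nat.sInf_le ⟨insert (Fin.last n) (A.image Fin.castSucc), rfl, hdel⟩
      _ = A.card + 1 := hcardA'
      _ ≤ k + 1 := by omega
  -- conclude
  have hmem' : F'.card ∈ {m | ∃ G : Finset (Equiv.Perm (Fin (n + 1))), G.card = m ∧
      ∀ α ∈ G, ∀ β ∈ G, ulamDist α β ≤ k + 1} := ⟨F', rfl, hdist⟩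
  have hbdd : BddAbove {m | ∃ G : Finset (Equiv.Perm (Fin (n + 1))), G.card = m ∧
      ∀ α ∈ G, ∀ β ∈ G, ulamDist α β ≤ k + 1} :=
    ⟨Fintype.card (Equiv.Perm (Fin (n + 1))), by
      rintro m ⟨G, hG, -⟩; rw [← hG, ← Finset.card_univ]; exact Finset.card_le_univ G⟩
  have := le_csSup hbdd hmem'
  rw [hcard, hFcard, mul_comm] at this
  exact this
end

section
/- For all integers 1 ≤ k ≤ n, f_k(n) ≤ 4·n·(k−1)!·C(n−1, k−1)², where C(a,b) denotes the binomial coefficient. -/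
/-!
Take two distinct members `β₀, β` of the family and symbols `a, u` with `a` before `u` in `β₀`
but after it in `β`. Every member `γ` agrees with `β₀` and with `β` after deleting `k` symbols;
deletions avoiding `a` and `u` preserve their relative order, so one of the two deletion sets
contains `a` or `u`. Hence the family lies in four classes "agrees with `ρ` after deleting a
`k`-set containing `x`", and a member of such a class is determined by the other `k - 1`
deleted symbols and the positions of all `k` of them: at most `C(n-1, k-1) · n!/(n-k)!` choices.
-/

theorem Nat.descFactorial_eq_mul_factorial_mul_choose_pred {n k : ℕ} (hk : 1 ≤ k) :
    n.descFactorial k = n * (k - 1).factorial * (n - 1).choose (k - 1) := by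
  obtain ⟨k, rfl⟩ := Nat.exists_eq_add_of_le' hk
  cases n with
  | zero => simp
  | succ n =>
    rw [Nat.succ_descFactorial_succ, Nat.descFactorial_eq_factorial_mul_choose]
    simp [mul_assoc]

namespace Ulam

open Finset

variable {n : ℕ}

lemma ulamDel_eq_map_filter (σ : Equiv.Perm (Fin n)) (A : Finset (Fin n)) :
    ulamDel σ A = ((List.finRange n).filter fun i => σ i ∉ A).map σ := by
  rw [ulamDel, List.ofFn_eq_map, List.filter_map]
  rfl

lemma ulamDel_eq_filter_ulamDel_of_subset {A B : Finset (Fin n)} (hAB : A ⊆ B)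
    (σ : Equiv.Perm (Fin n)) :
    ulamDel σ B = (ulamDel σ A).filter fun x => x ∉ B := by
  rw [ulamDel, ulamDel, List.filter_filter]
  refine List.filter_congr fun x _ => ?_
  by_cases hx : x ∈ B
  · simp [hx]
  · have hxA : x ∉ A := fun h => hx (hAB h)
    simp [hx, hxA]

lemma ulamDel_pairwise (σ : Equiv.Perm (Fin n)) (A : Finset (Fin n)) :
    (ulamDel σ A).Pairwise fun x y => σ.symm x < σ.symm y := by
  rw [ulamDel_eq_map_filter, List.pairwise_map]
  simpa using (List.pairwise_lt_finRange n).filter _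

lemma symm_lt_symm_of_ulamDel_eq {σ τ : Equiv.Perm (Fin n)} {A : Finset (Fin n)}
    (h : ulamDel σ A = ulamDel τ A) {a u : Fin n} (ha : a ∉ A) (hu : u ∉ A)
    (hlt : σ.symm a < σ.symm u) : τ.symm a < τ.symm u := by
  have mem : ∀ x ∉ A, x ∈ ulamDel σ A := fun x hx =>
    List.mem_filter.2 ⟨List.mem_ofFn.2 ⟨_, σ.apply_symm_apply x⟩, by simpa using hx⟩
  have hτ : (ulamDel σ A).Pairwise fun x y => τ.symm x < τ.symm y := h ▸ ulamDel_pairwise τ A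
  -- Sortedness by both orders makes the σ-order imply the τ-order on kept symbols.
  let R x y := σ.symm x < σ.symm y → τ.symm x < τ.symm y
  have hR : (ulamDel σ A).Pairwise R := hτ.imp fun {x y} hxy (_ : σ.symm x < σ.symm y) => hxy
  have hR' : (ulamDel σ A).Pairwise (flip R) :=
    (ulamDel_pairwise σ A).imp fun hxy hyx => absurd hyx (lt_asymm hxy)
  exact hR.forall_of_forall_of_flip (fun _ _ hxx => absurd hxx (lt_irrefl _)) hR'
    (mem a ha) (mem u hu) hlt

lemma eq_of_ulamDel_eq {σ τ : Equiv.Perm (Fin n)} {A : Finset (Fin n)}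
    (h : ulamDel σ A = ulamDel τ A) (hA : ∀ s ∈ A, σ.symm s = τ.symm s) : σ = τ := by
  have agree : ∀ i, σ i ∈ A → τ i = σ i := fun i hi =>
    τ.symm.injective (by rw [τ.symm_apply_apply, ← hA _ hi, σ.symm_apply_apply])
  have agree' : ∀ i, τ i ∈ A → σ i = τ i := fun i hi =>
    σ.symm.injective (by rw [σ.symm_apply_apply, hA _ hi, τ.symm_apply_apply])
  have mem_iff : ∀ i, σ i ∈ A ↔ τ i ∈ A := fun i =>
    ⟨fun hi => agree i hi ▸ hi, fun hi => agree' i hi ▸ hi⟩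
  rw [ulamDel_eq_map_filter, ulamDel_eq_map_filter] at h
  simp_rw [mem_iff, List.map_inj_left] at h
  ext i
  by_cases hτ : τ i ∈ A
  · rw [agree' i hτ]
  · exact congrArg Fin.val (h i (by simp [hτ]))

lemma card_filter_ulamDel_eq_le (ρ : Equiv.Perm (Fin n)) (A : Finset (Fin n)) :
    #{γ | ulamDel γ A = ulamDel ρ A} ≤ n.descFactorial #A := by
  let positions : Equiv.Perm (Fin n) → (A ↪ Fin n) := fun γ =>
    ⟨fun s => γ.symm s, γ.symm.injective.comp Subtype.val_injective⟩
  calc #{γ | ulamDel γ A = ulamDel ρ A}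
      ≤ #(univ : Finset (A ↪ Fin n)) := by
        refine card_le_card_of_injOn positions (fun _ _ => mem_coe.2 (mem_univ _)) ?_
        intro γ hγ γ' hγ' hpos
        simp only [coe_filter, Set.mem_ofPred_eq, mem_univ, true_and] at hγ hγ'
        exact eq_of_ulamDel_eq (hγ.trans hγ'.symm) fun s hs =>
          DFunLike.congr_fun hpos ⟨s, hs⟩
    _ = n.descFactorial #A := by simp [Fintype.card_embedding_eq]

lemma exists_card_eq_ulamDel_eq_of_ulamDist_le {σ τ : Equiv.Perm (Fin n)} {k : ℕ}
    (h : ulamDist σ τ ≤ k) (hkn : k ≤ n) :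
    ∃ A : Finset (Fin n), #A = k ∧ ulamDel σ A = ulamDel τ A := by
  have hne : {m | ∃ A : Finset (Fin n), #A = m ∧ ulamDel σ A = ulamDel τ A}.Nonempty :=
    ⟨n, univ, by simp, by simp [ulamDel]⟩
  obtain ⟨A₀, hA₀, hσA₀⟩ := Nat.sInf_mem hne
  obtain ⟨A, hA₀A, -, hA⟩ := exists_subsuperset_card_eq (subset_univ A₀) (hA₀.trans_le h)
    (by simpa using hkn)
  exact ⟨A, hA, by rw [ulamDel_eq_filter_ulamDel_of_subset hA₀A,
    ulamDel_eq_filter_ulamDel_of_subset hA₀A, hσA₀]⟩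

lemma exists_inversion {σ τ : Equiv.Perm (Fin n)} (hne : σ ≠ τ) :
    ∃ a u : Fin n, σ.symm a < σ.symm u ∧ ¬τ.symm a < τ.symm u := by
  by_contra! h
  have hmono : StrictMono (τ.symm ∘ σ) := fun i j hij => h _ _ (by simpa using hij)
  have hid : τ.symm ∘ σ = id := (hmono.range_inj strictMono_id).1 (by simp)
  exact hne (Equiv.ext fun i => by simpa using congrArg τ (congrFun hid i))

open Classical in
noncomputable def deletionClass (k : ℕ) (ρ : Equiv.Perm (Fin n)) (x : Fin n) :
    Finset (Equiv.Perm (Fin n)) :=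
  {γ | ∃ A : Finset (Fin n), #A = k ∧ x ∈ A ∧ ulamDel γ A = ulamDel ρ A}

lemma card_deletionClass_le {k : ℕ} (hk : 1 ≤ k) (ρ : Equiv.Perm (Fin n)) (x : Fin n) :
    #(deletionClass k ρ x) ≤ (n - 1).choose (k - 1) * n.descFactorial k := by
  classical
  let classOf (B : Finset (Fin n)) : Finset (Equiv.Perm (Fin n)) :=
    {γ | ulamDel γ (insert x B) = ulamDel ρ (insert x B)}
  have hsub : deletionClass k ρ x ⊆ (powersetCard (k - 1) (univ.erase x)).biUnion classOf := by
    intro γ hγ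
    obtain ⟨A, hA, hxA, hγA⟩ := (mem_filter.1 hγ).2
    refine mem_biUnion.2 ⟨A.erase x, mem_powersetCard.2 ⟨erase_subset_erase _ (subset_univ A),
      by rw [card_erase_of_mem hxA, hA]⟩, ?_⟩
    simpa [classOf, insert_erase hxA] using hγA
  calc #(deletionClass k ρ x)
      ≤ ∑ B ∈ powersetCard (k - 1) (univ.erase x), #(classOf B) :=
        (card_le_card hsub).trans card_biUnion_le
    _ ≤ ∑ B ∈ powersetCard (k - 1) (univ.erase x), n.descFactorial k := by
        refine sum_le_sum fun B hB => (card_filter_ulamDel_eq_le ρ _).trans_eq ?_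
        obtain ⟨hBx, hB⟩ := mem_powersetCard.1 hB
        rw [card_insert_of_notMem fun hx => by simpa using hBx hx, hB, Nat.sub_add_cancel hk]
    _ = (n - 1).choose (k - 1) * n.descFactorial k := by simp

lemma mem_deletionClass_of_inversion {k : ℕ} {β₀ β γ : Equiv.Perm (Fin n)} {a u : Fin n}
    (hinv₀ : β₀.symm a < β₀.symm u) (hinv : ¬β.symm a < β.symm u)
    (h₀ : ∃ A : Finset (Fin n), #A = k ∧ ulamDel γ A = ulamDel β₀ A)
    (h : ∃ B : Finset (Fin n), #B = k ∧ ulamDel γ B = ulamDel β B) :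
    γ ∈ deletionClass k β₀ a ∪ deletionClass k β₀ u ∪ deletionClass k β a ∪
      deletionClass k β u := by
  obtain ⟨A, hA, hγA⟩ := h₀
  obtain ⟨B, hB, hγB⟩ := h
  simp only [deletionClass, mem_union, mem_filter, mem_univ, true_and]
  by_contra! hcon
  obtain ⟨⟨⟨haA, huA⟩, haB⟩, huB⟩ := hcon
  exact hinv <| symm_lt_symm_of_ulamDel_eq hγB (fun ha => haB B hB ha hγB)
    (fun hu => huB B hB hu hγB) <| symm_lt_symm_of_ulamDel_eq hγA.symm
    (fun ha => haA A hA ha hγA) (fun hu => huA A hA hu hγA) hinv₀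

theorem card_le_of_forall_ulamDist_le {k : ℕ} (hk : 1 ≤ k) (hkn : k ≤ n)
    {F : Finset (Equiv.Perm (Fin n))} (hF : ∀ α ∈ F, ∀ β ∈ F, ulamDist α β ≤ k) :
    #F ≤ 4 * ((n - 1).choose (k - 1) * n.descFactorial k) := by
  rcases le_or_gt #F 1 with hF1 | hF1
  · have := Nat.mul_pos (Nat.choose_pos (Nat.sub_le_sub_right hkn 1))
      (Nat.descFactorial_pos.2 hkn)
    omega
  obtain ⟨β₀, hβ₀, β, hβ, hne⟩ := one_lt_card.1 hF1
  obtain ⟨a, u, hinv₀, hinv⟩ := exists_inversion hne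
  have hcover := fun γ (hγ : γ ∈ F) => mem_deletionClass_of_inversion hinv₀ hinv
    (exists_card_eq_ulamDel_eq_of_ulamDist_le (hF γ hγ β₀ hβ₀) hkn)
    (exists_card_eq_ulamDel_eq_of_ulamDist_le (hF γ hγ β hβ) hkn)
  have hclass := card_deletionClass_le (n := n) hk
  calc #F ≤ #(deletionClass k β₀ a ∪ deletionClass k β₀ u ∪ deletionClass k β a ∪
        deletionClass k β u) := card_le_card hcover
    _ ≤ #(deletionClass k β₀ a) + #(deletionClass k β₀ u) + #(deletionClass k β a) +
        #(deletionClass k β u) :=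
      (card_union_le _ _).trans <| add_le_add_left
        ((card_union_le _ _).trans <| add_le_add_left (card_union_le _ _) _) _
    _ ≤ 4 * ((n - 1).choose (k - 1) * n.descFactorial k) := by
      linarith [hclass β₀ a, hclass β₀ u, hclass β a, hclass β u]

end Ulam

/-- For all `1 ≤ k ≤ n`, `f_k(n) ≤ 4·n·(k−1)!·C(n−1, k−1)²`. -/
theorem maxDiamFamily_other_bound (n k : ℕ) (hk : 1 ≤ k) (hkn : k ≤ n) :
    maxDiamFamily n k ≤ 4 * n * (k - 1).factorial * ((n - 1).choose (k - 1)) ^ 2 := by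
  refine csSup_le ⟨0, ∅, rfl, by simp⟩ ?_
  rintro _ ⟨F, rfl, hF⟩
  calc F.card ≤ 4 * ((n - 1).choose (k - 1) * n.descFactorial k) :=
        Ulam.card_le_of_forall_ulamDist_le hk hkn hF
    _ = 4 * n * (k - 1).factorial * ((n - 1).choose (k - 1)) ^ 2 := by
      rw [Nat.descFactorial_eq_mul_factorial_mul_choose_pred hk]
      ring
end

section
/- Suppose G is a finite graph on vertex set V with vertex cover number τ. Then for every integer m, the number of vertex covers of G having exactly m vertices is at most 2^τ · C(|V| − τ, m − τ), where C(a,b) denotes the binomial coefficient. -/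
/-- A vertex cover of a graph: a set of vertices meeting every edge. -/
def IsVertexCover {V : Type*} (G : SimpleGraph V) (C : Set V) : Prop :=
  ∀ ⦃x y : V⦄, G.Adj x y → x ∈ C ∨ y ∈ C

/-- The vertex cover number of a graph: the size of a smallest vertex cover. -/
noncomputable def vertexCoverNumber {V : Type*} (G : SimpleGraph V) : ℕ :=
  sInf {m | ∃ C : Finset V, C.card = m ∧ IsVertexCover G ↑C}

/-!
Fix a minimum vertex cover `C₀` and sort the `m`-element covers `C` by their trace `A = C ∩ C₀`;
there are at most `2^τ` traces. A cover with trace `A` must contain `F = A ∪ N(C₀ \ A)`, and `F` is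
itself a vertex cover, so `τ ≤ |F|`. Since `C` meets `C₀ ∪ F` exactly in `F`, it is determined by
its `m - |F|` vertices outside `C₀ ∪ F`, which leaves at most `C(n - |C₀ ∪ F|, m - |F|)` covers
with trace `A`, and this is at most `C(n - τ, m - τ)` because `τ ≤ |F| ≤ |C₀ ∪ F|`.
-/

open Finset

theorem Nat.choose_le_choose_add_add (a b d : ℕ) : a.choose b ≤ (a + d).choose (b + d) := by
  induction d with
  | zero => rfl
  | succ d ih =>
    refine ih.trans ?_
    rw [← add_assoc, ← add_assoc, Nat.choose_succ_succ']
    exact Nat.le_add_right _ _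

theorem Nat.choose_sub_le_choose_sub {n u f t m : ℕ} (htf : t ≤ f) (hfu : f ≤ u) (hun : u ≤ n) :
    (n - u).choose (m - f) ≤ (n - t).choose (m - t) := by
  rcases le_total f m with hfm | hmf
  · calc (n - u).choose (m - f) ≤ (n - u + (f - t)).choose (m - f + (f - t)) :=
          Nat.choose_le_choose_add_add _ _ _
      _ = (n - u + (f - t)).choose (m - t) := by congr 1; omega
      _ ≤ (n - t).choose (m - t) := Nat.choose_le_choose _ (by omega)
  · rw [Nat.sub_eq_zero_of_le hmf, Nat.choose_zero_right, Nat.one_le_iff_ne_zero]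
    exact (Nat.choose_pos (by omega)).ne'

theorem Finset.card_filter_inter_eq_card_eq_le {α : Type*} [Fintype α] [DecidableEq α]
    (U F : Finset α) (m : ℕ) :
    #{C : Finset α | C ∩ U = F ∧ #C = m} ≤ (#Uᶜ).choose (m - #F) := by
  calc #{C : Finset α | C ∩ U = F ∧ #C = m}
      ≤ #((powersetCard (m - #F) Uᶜ).image (F ∪ ·)) := by
        refine card_le_card fun C hC => ?_
        obtain ⟨hCU, hCm⟩ := (mem_filter.1 hC).2
        refine mem_image.2 ⟨C \ U, mem_powersetCard.2 ⟨fun v hv => ?_, ?_⟩, ?_⟩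
        · exact mem_compl.2 (mem_sdiff.1 hv).2
        · have := card_sdiff_add_card_inter C U
          rw [hCU] at this
          omega
        · rw [← hCU, union_comm, sdiff_union_inter]
    _ ≤ #(powersetCard (m - #F) Uᶜ) := card_image_le
    _ = (#Uᶜ).choose (m - #F) := card_powersetCard _ _

def forcedVertices {V : Type*} [Fintype V] [DecidableEq V] (G : SimpleGraph V) [DecidableRel G.Adj]
    (C₀ A : Finset V) : Finset V :=
  A ∪ ({v | ∃ u ∈ C₀ \ A, G.Adj u v} : Finset V)

section VertexCover

variable {V : Type*} {G : SimpleGraph V}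

theorem IsVertexCover.vertexCoverNumber_le {C : Finset V} (hC : IsVertexCover G C) :
    vertexCoverNumber G ≤ #C :=
  Nat.sInf_le ⟨C, rfl, hC⟩

variable [Fintype V]

theorem exists_isVertexCover_card_eq_vertexCoverNumber (G : SimpleGraph V) :
    ∃ C : Finset V, #C = vertexCoverNumber G ∧ IsVertexCover G C :=
  Nat.sInf_mem (s := {m | ∃ C : Finset V, #C = m ∧ IsVertexCover G C})
    ⟨_, univ, rfl, fun x _ _ => Or.inl (mem_coe.2 (mem_univ x))⟩

section Forced

variable [DecidableEq V] [DecidableRel G.Adj]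

theorem isVertexCover_forcedVertices {C₀ : Finset V} (hC₀ : IsVertexCover G C₀) (A : Finset V) :
    IsVertexCover G (forcedVertices G C₀ A) := by
  have key : ∀ ⦃x y⦄, G.Adj x y → x ∈ C₀ →
      x ∈ forcedVertices G C₀ A ∨ y ∈ forcedVertices G C₀ A := by
    intro x y hxy hx
    by_cases hxA : x ∈ A
    · exact Or.inl (mem_union_left _ hxA)
    · exact Or.inr (mem_union_right _ (mem_filter.2 ⟨mem_univ y, x, mem_sdiff.2 ⟨hx, hxA⟩, hxy⟩))
  intro x y hxy
  rcases hC₀ hxy with hx | hy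
  · exact key hxy hx
  · exact (key hxy.symm hy).symm

theorem IsVertexCover.forcedVertices_inter_subset {C : Finset V} (hC : IsVertexCover G C)
    (C₀ : Finset V) : forcedVertices G C₀ (C ∩ C₀) ⊆ C := by
  intro v hv
  rcases mem_union.1 hv with hv | hv
  · exact (mem_inter.1 hv).1
  · obtain ⟨u, hu, huv⟩ := (mem_filter.1 hv).2
    obtain ⟨huC₀, huC⟩ := mem_sdiff.1 hu
    exact (hC huv).resolve_left fun h => huC (mem_inter.2 ⟨h, huC₀⟩)

theorem IsVertexCover.inter_union_forcedVertices {C : Finset V} (hC : IsVertexCover G C)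
    (C₀ : Finset V) :
    C ∩ (C₀ ∪ forcedVertices G C₀ (C ∩ C₀)) = forcedVertices G C₀ (C ∩ C₀) := by
  rw [inter_union_distrib_left, inter_eq_right.2 (hC.forcedVertices_inter_subset C₀)]
  exact union_eq_right.2 subset_union_left

end Forced

open scoped Classical in
theorem card_isVertexCover_inter_eq_le {C₀ : Finset V} (hC₀ : IsVertexCover G C₀)
    (A : Finset V) (m : ℕ) :
    #{C : Finset V | (#C = m ∧ IsVertexCover G C) ∧ C ∩ C₀ = A} ≤
      (Fintype.card V - vertexCoverNumber G).choose (m - vertexCoverNumber G) := by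
  set F := forcedVertices G C₀ A
  calc #{C : Finset V | (#C = m ∧ IsVertexCover G C) ∧ C ∩ C₀ = A}
      ≤ #{C : Finset V | C ∩ (C₀ ∪ F) = F ∧ #C = m} := by
        refine card_le_card (monotone_filter_right _ fun C _ hC => ?_)
        obtain ⟨⟨hCm, hC⟩, rfl⟩ := hC
        exact ⟨hC.inter_union_forcedVertices C₀, hCm⟩
    _ ≤ (#(C₀ ∪ F)ᶜ).choose (m - #F) := card_filter_inter_eq_card_eq_le _ _ _
    _ ≤ (Fintype.card V - vertexCoverNumber G).choose (m - vertexCoverNumber G) := by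
        rw [card_compl]
        exact Nat.choose_sub_le_choose_sub (isVertexCover_forcedVertices hC₀ A).vertexCoverNumber_le
          (card_le_card subset_union_right) (card_le_univ _)

open scoped Classical in
theorem card_isVertexCover_le {C₀ : Finset V} (hC₀ : IsVertexCover G C₀) (m : ℕ) :
    #{C : Finset V | #C = m ∧ IsVertexCover G C} ≤
      2 ^ #C₀ * (Fintype.card V - vertexCoverNumber G).choose (m - vertexCoverNumber G) := by
  rw [card_eq_sum_card_fiberwise fun C _ => mem_powerset.2 (inter_subset_right (s₁ := C)),
    ← card_powerset, ← smul_eq_mul, ← sum_const]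
  refine sum_le_sum fun A _ => ?_
  rw [filter_filter]
  exact card_isVertexCover_inter_eq_le hC₀ A m

end VertexCover

/-- If `G` is a finite graph with vertex cover number `τ`, then for
every integer `m` the number of vertex covers of `G` with exactly `m` vertices is at most
`2^τ · C(|V| − τ, m − τ)`. -/
theorem count_vertex_covers_le {V : Type*} [Fintype V] (G : SimpleGraph V) (τ m : ℕ)
    (hτ : vertexCoverNumber G = τ) :
    {C : Finset V | C.card = m ∧ IsVertexCover G ↑C}.ncard ≤
      2 ^ τ * (Fintype.card V - τ).choose (m - τ) := by
  classical
  obtain ⟨C₀, hC₀card, hC₀⟩ := exists_isVertexCover_card_eq_vertexCoverNumber G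
  subst hτ
  rw [← coe_filter_univ, Set.ncard_coe_finset]
  exact hC₀card ▸ card_isVertexCover_le hC₀ m
end

section
/- For every σ ∈ S_n and every integer 0 ≤ r ≤ n, the ball of radius r around σ satisfies |{γ ∈ S_n : d_U(σ, γ) ≤ r}| ≤ r! · C(n, r)², where C(a,b) denotes the binomial coefficient. -/
/-!
If `d_U(σ, γ) ≤ r`, padding an optimal deletion set gives `A` with `|A| = r` and
`σ − A = γ − A`. Given `A` and the string `σ − A`, the permutation `γ` is recovered from the
positions `γ⁻¹(a)`, `a ∈ A`, which form an injection `A ↪ [n]`. Hence the ball is covered by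
`C(n, r)` fibres of size at most `n!/(n-r)! = r! · C(n, r)` each.
-/

theorem List.eq_of_forall₂_of_filter_eq {α : Type*} {p : α → Bool} {l₁ l₂ : List α}
    (h : List.Forall₂ (fun a b => a = b ∨ p a ∧ p b) l₁ l₂) (hf : l₁.filter p = l₂.filter p) :
    l₁ = l₂ := by
  induction h with
  | nil => rfl
  | @cons a b t₁ t₂ hab _ ih =>
    rcases hab with rfl | ⟨ha, hb⟩
    · cases hpa : p a <;> simp_all
    · simp only [List.filter_cons, ha, hb, if_true, List.cons.injEq] at hf
      rw [hf.1, ih hf.2]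

theorem ulamDel_eq_filter_of_subset {n : ℕ} (γ : Equiv.Perm (Fin n)) {A B : Finset (Fin n)}
    (h : A ⊆ B) : ulamDel γ B = (ulamDel γ A).filter (fun x => decide (x ∉ B)) := by
  simp only [ulamDel, List.filter_filter]
  congr 1
  funext x
  by_cases hx : x ∈ B
  · simp [hx]
  · simp [hx, show x ∉ A from fun hA => hx (h hA)]

theorem exists_card_eq_ulamDel_eq_of_ulamDist_le {n r : ℕ} {σ γ : Equiv.Perm (Fin n)}
    (hd : ulamDist σ γ ≤ r) (hr : r ≤ n) :
    ∃ A : Finset (Fin n), A.card = r ∧ ulamDel σ A = ulamDel γ A := by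
  have hne : {m | ∃ A : Finset (Fin n), A.card = m ∧ ulamDel σ A = ulamDel γ A}.Nonempty :=
    ⟨n, Finset.univ, by simp, by simp [ulamDel]⟩
  obtain ⟨A, hAd, hA⟩ := Nat.sInf_mem hne
  obtain ⟨B, hAB, -, hB⟩ := Finset.exists_subsuperset_card_eq (Finset.subset_univ A)
    (hAd.trans_le hd) (by simpa using hr)
  exact ⟨B, hB, by rw [ulamDel_eq_filter_of_subset σ hAB, ulamDel_eq_filter_of_subset γ hAB, hA]⟩

theorem Equiv.Perm.eq_of_ulamDel_eq_of_symm_eqOn {n : ℕ} {γ₁ γ₂ : Equiv.Perm (Fin n)}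
    {A : Finset (Fin n)} (hdel : ulamDel γ₁ A = ulamDel γ₂ A)
    (hpos : ∀ a ∈ A, γ₁.symm a = γ₂.symm a) : γ₁ = γ₂ := by
  have hpointwise : ∀ i, γ₁ i = γ₂ i ∨ γ₁ i ∉ A ∧ γ₂ i ∉ A := by
    intro i
    by_cases h₁ : γ₁ i ∈ A
    · exact Or.inl (by simpa [Equiv.eq_symm_apply, eq_comm] using hpos _ h₁)
    by_cases h₂ : γ₂ i ∈ A
    · exact Or.inl (by simpa [Equiv.eq_symm_apply] using (hpos _ h₂).symm)
    · exact Or.inr ⟨h₁, h₂⟩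
  have hlists : List.ofFn (fun i => γ₁ i) = List.ofFn (fun i => γ₂ i) := by
    refine List.eq_of_forall₂_of_filter_eq (p := fun x => decide (x ∉ A)) ?_ hdel
    rw [List.forall₂_iff_get]
    refine ⟨by simp, fun i h₁ h₂ => ?_⟩
    simpa using hpointwise ⟨i, by simpa using h₁⟩
  exact Equiv.ext (congrFun (List.ofFn_injective hlists))

theorem card_filter_ulamDel_eq_le {n : ℕ} (A : Finset (Fin n)) (L : List (Fin n)) :
    (Finset.univ.filter fun γ : Equiv.Perm (Fin n) => ulamDel γ A = L).card ≤
      n.descFactorial A.card := by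
  let positions (γ : Equiv.Perm (Fin n)) : A ↪ Fin n :=
    ⟨fun a => γ.symm a, fun a b h => Subtype.ext (γ.symm.injective h)⟩
  calc _ ≤ (Finset.univ : Finset (A ↪ Fin n)).card := by
        refine Finset.card_le_card_of_injOn positions (by simp) fun γ₁ h₁ γ₂ h₂ h => ?_
        simp only [Finset.coe_filter, Finset.mem_univ, true_and, Set.mem_ofPred_eq] at h₁ h₂
        exact Equiv.Perm.eq_of_ulamDel_eq_of_symm_eqOn (h₁.trans h₂.symm)
          fun a ha => DFunLike.congr_fun h ⟨a, ha⟩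
    _ = n.descFactorial A.card := by simp [Fintype.card_embedding_eq]

/-- For every `σ ∈ S_n` and `0 ≤ r ≤ n`, the ball of radius `r` around
`σ` has size at most `r! · C(n, r)²`. -/
theorem ulam_ball_size_le {n : ℕ} (σ : Equiv.Perm (Fin n)) (r : ℕ) (hr : r ≤ n) :
    {γ : Equiv.Perm (Fin n) | ulamDist σ γ ≤ r}.ncard ≤ r.factorial * (n.choose r) ^ 2 := by
  have hcover : Finset.univ.filter (fun γ => ulamDist σ γ ≤ r) ⊆
      (Finset.univ.powersetCard r).biUnion fun A =>
        Finset.univ.filter fun γ => ulamDel γ A = ulamDel σ A := by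
    intro γ hγ
    obtain ⟨A, hA, hdel⟩ :=
      exists_card_eq_ulamDel_eq_of_ulamDist_le (Finset.mem_filter.mp hγ).2 hr
    simpa using ⟨A, hA, hdel.symm⟩
  rw [Set.ncard_eq_toFinset_card', Set.toFinset_ofPred]
  calc _ ≤ _ := Finset.card_le_card hcover
    _ ≤ n.choose r * n.descFactorial r := by
      refine (Finset.card_biUnion_le_card_mul _ _ (n.descFactorial r) fun A hA => ?_).trans_eq
        (by simp)
      rw [← (Finset.mem_powersetCard.mp hA).2]
      exact card_filter_ulamDel_eq_le A _
    _ = r.factorial * n.choose r ^ 2 := by rw [Nat.descFactorial_eq_factorial_mul_choose]; ring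
end
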